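/- Let H : ℝ³ → ℝ be differentiable and let (x₁,x₂,x₃,t) : ℝ → ℝ⁴ be a differentiable curve satisfying x₁' = 2x₂·∂₂H + 2x₃·∂₃H − H, x₂' = −2x₂·∂₁H, x₃' = −2x₃·∂₁H, t' = t·∂₁H, with H and its partial derivatives evaluated at (x₁(s),x₂(s),x₃(s)). Then the three functions s ↦ t(s)·H(x₁(s),x₂(s),x₃(s)), s ↦ t(s)²·x₂(s), and s ↦ t(s)²·x₃(s) are all constant. -/

import Mathlib

/-- Along the Poissonized flow of the 3D linear Jacobi Hamiltonian system,
the lifted homogeneous Hamiltonian `t·H` and the Casimir functions `t²x₂`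
and `t²x₃` are all conserved. -/
theorem stmt_13 (H : ℝ × ℝ × ℝ → ℝ) (hH : Differentiable ℝ H)
    (x₁ x₂ x₃ t : ℝ → ℝ)
    (h₁ : Differentiable ℝ x₁) (h₂ : Differentiable ℝ x₂)
    (h₃ : Differentiable ℝ x₃) (h₄ : Differentiable ℝ t)
    (hx₁ : ∀ s, deriv x₁ s
      = 2 * x₂ s * deriv (fun b => H (x₁ s, b, x₃ s)) (x₂ s)
        + 2 * x₃ s * deriv (fun c => H (x₁ s, x₂ s, c)) (x₃ s)
        - H (x₁ s, x₂ s, x₃ s))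
    (hx₂ : ∀ s, deriv x₂ s = -(2 * x₂ s * deriv (fun a => H (a, x₂ s, x₃ s)) (x₁ s)))
    (hx₃ : ∀ s, deriv x₃ s = -(2 * x₃ s * deriv (fun a => H (a, x₂ s, x₃ s)) (x₁ s)))
    (ht : ∀ s, deriv t s = t s * deriv (fun a => H (a, x₂ s, x₃ s)) (x₁ s)) :
    ∀ s₁ s₂ : ℝ,
      t s₁ * H (x₁ s₁, x₂ s₁, x₃ s₁) = t s₂ * H (x₁ s₂, x₂ s₂, x₃ s₂)
      ∧ t s₁ ^ 2 * x₂ s₁ = t s₂ ^ 2 * x₂ s₂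
      ∧ t s₁ ^ 2 * x₃ s₁ = t s₂ ^ 2 * x₃ s₂ := by
  set p : ℝ → ℝ × ℝ × ℝ := fun s => (x₁ s, x₂ s, x₃ s) with hp
  set D1 : ℝ → ℝ := fun s => fderiv ℝ H (p s) (1, 0, 0) with hD1
  set D2 : ℝ → ℝ := fun s => fderiv ℝ H (p s) (0, 1, 0) with hD2
  set D3 : ℝ → ℝ := fun s => fderiv ℝ H (p s) (0, 0, 1) with hD3
  -- partial derivatives
  have hpa : ∀ s, deriv (fun a => H (a, x₂ s, x₃ s)) (x₁ s) = D1 s := by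
    intro s
    have hc : HasDerivAt (fun a : ℝ => (a, x₂ s, x₃ s)) ((1 : ℝ), (0 : ℝ), (0 : ℝ)) (x₁ s) :=
      (hasDerivAt_id (x₁ s)).prodMk ((hasDerivAt_const _ _).prodMk (hasDerivAt_const _ _))
    exact ((hH (p s)).hasFDerivAt.comp_hasDerivAt (x₁ s) hc).deriv
  have hpb : ∀ s, deriv (fun b => H (x₁ s, b, x₃ s)) (x₂ s) = D2 s := by
    intro s
    have hc : HasDerivAt (fun b : ℝ => (x₁ s, b, x₃ s)) ((0 : ℝ), (1 : ℝ), (0 : ℝ)) (x₂ s) :=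
      (hasDerivAt_const _ _).prodMk ((hasDerivAt_id (x₂ s)).prodMk (hasDerivAt_const _ _))
    exact ((hH (p s)).hasFDerivAt.comp_hasDerivAt (x₂ s) hc).deriv
  have hpc : ∀ s, deriv (fun c => H (x₁ s, x₂ s, c)) (x₃ s) = D3 s := by
    intro s
    have hc : HasDerivAt (fun c : ℝ => (x₁ s, x₂ s, c)) ((0 : ℝ), (0 : ℝ), (1 : ℝ)) (x₃ s) :=
      (hasDerivAt_const _ _).prodMk ((hasDerivAt_const _ _).prodMk (hasDerivAt_id (x₃ s)))
    exact ((hH (p s)).hasFDerivAt.comp_hasDerivAt (x₃ s) hc).deriv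
  -- derivative of H along the curve
  have hgd : ∀ s, HasDerivAt (fun s => H (p s)) (deriv x₁ s * D1 s + deriv x₂ s * D2 s + deriv x₃ s * D3 s) s := by
    intro s
    have hc : HasDerivAt p (deriv x₁ s, deriv x₂ s, deriv x₃ s) s :=
      (h₁ s).hasDerivAt.prodMk (((h₂ s).hasDerivAt).prodMk ((h₃ s).hasDerivAt))
    have h := (hH (p s)).hasFDerivAt.comp_hasDerivAt s hc
    have hv : ((deriv x₁ s, deriv x₂ s, deriv x₃ s) : ℝ × ℝ × ℝ)
        = deriv x₁ s • ((1:ℝ), (0:ℝ), (0:ℝ)) + deriv x₂ s • ((0:ℝ), (1:ℝ), (0:ℝ))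
          + deriv x₃ s • ((0:ℝ), (0:ℝ), (1:ℝ)) := by
      simp [Prod.ext_iff]
    rw [show fderiv ℝ H (p s) (deriv x₁ s, deriv x₂ s, deriv x₃ s)
        = deriv x₁ s * D1 s + deriv x₂ s * D2 s + deriv x₃ s * D3 s from by
      rw [hv, map_add, map_add, map_smul, map_smul, map_smul]; simp [hD1, hD2, hD3, smul_eq_mul]] at h
    exact h
  have htd : ∀ s, HasDerivAt t (t s * D1 s) s := by
    intro s
    have := (h₄ s).hasDerivAt
    rwa [ht s, hpa s] at this
  have h2d : ∀ s, HasDerivAt x₂ (-(2 * x₂ s * D1 s)) s := by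
    intro s
    have := (h₂ s).hasDerivAt
    rwa [hx₂ s, hpa s] at this
  have h3d : ∀ s, HasDerivAt x₃ (-(2 * x₃ s * D1 s)) s := by
    intro s
    have := (h₃ s).hasDerivAt
    rwa [hx₃ s, hpa s] at this
  have hgd' : ∀ s, HasDerivAt (fun s => H (p s)) (-(D1 s * H (p s))) s := by
    intro s
    have h := hgd s
    rw [hx₁ s, hx₂ s, hx₃ s, hpa s, hpb s, hpc s] at h
    have : 2 * x₂ s * D2 s + 2 * x₃ s * D3 s - H (x₁ s, x₂ s, x₃ s) = deriv x₁ s := by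
      rw [hx₁ s, hpb s, hpc s]
    convert h using 1
    show -(D1 s * H (p s)) = _
    have hps : H (x₁ s, x₂ s, x₃ s) = H (p s) := rfl
    rw [hps]; ring
  -- conserved quantity 1 : t * H ∘ p
  have c1 : ∀ s, HasDerivAt (fun s => t s * H (p s)) 0 s := by
    intro s
    have h := (htd s).fun_mul (hgd' s)
    exact h.congr_deriv (by ring)
  have c2 : ∀ s, HasDerivAt (fun s => t s ^ 2 * x₂ s) 0 s := by
    intro s
    have h := ((htd s).fun_pow 2).fun_mul (h2d s)
    refine h.congr_deriv ?_
    push_cast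
    ring
  have c3 : ∀ s, HasDerivAt (fun s => t s ^ 2 * x₃ s) 0 s := by
    intro s
    have h := ((htd s).fun_pow 2).fun_mul (h3d s)
    refine h.congr_deriv ?_
    push_cast
    ring
  intro s₁ s₂
  refine ⟨?_, ?_, ?_⟩
  · exact is_const_of_deriv_eq_zero (fun s => (c1 s).differentiableAt)
      (fun s => (c1 s).deriv) s₁ s₂
  · exact is_const_of_deriv_eq_zero (fun s => (c2 s).differentiableAt)
      (fun s => (c2 s).deriv) s₁ s₂
  · exact is_const_of_deriv_eq_zero (fun s => (c3 s).differentiableAt)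
      (fun s => (c3 s).deriv) s₁ s₂
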